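/- arXiv:2209.12755 — 5 statements merged into one kernel-verified Lean document; each statement's English description precedes it below -/
import Mathlib

section
/- Let L and n be positive integers with n < L and L ≥ 2, let Ω ⊆ Z_L with |Ω| = n, and let C be a complex sequence of length L whose unitary DFT satisfies |ĉ_f|² = L/(L−n) for f ∉ Ω and ĉ_f = 0 for f ∈ Ω. Then the maximum autocorrelation sidelobe satisfies max_{0<τ<L} |θ_C(τ)| ≥ L·√(n/((L−n)(L−1))). -/
/-- Periodic cross-correlation of two length-`L` complex sequences. -/
noncomputable def pcc (L : ℕ) (c d : ℕ → ℂ) (τ : ℕ) : ℂ :=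
  ∑ t ∈ Finset.range L, c t * (starRingEnd ℂ) (d ((t + τ) % L))

/-- Unitary DFT of a length-`L` complex sequence. -/
noncomputable def udft (L : ℕ) (c : ℕ → ℂ) (f : ℕ) : ℂ :=
  ((Real.sqrt L : ℝ) : ℂ)⁻¹ * ∑ t ∈ Finset.range L,
    c t * Complex.exp (-(2 * (Real.pi : ℂ) * Complex.I * (t : ℂ) * (f : ℂ)) / (L : ℂ))

open Finset Complex

noncomputable def EE (L : ℕ) (k : ℤ) : ℂ :=
  Complex.exp (2 * (Real.pi : ℂ) * Complex.I * (k : ℂ) / (L : ℂ))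

lemma EE_add (L : ℕ) (a b : ℤ) : EE L (a + b) = EE L a * EE L b := by
  rw [EE, EE, EE, ← Complex.exp_add]
  congr 1
  push_cast
  ring

lemma EE_pow (L : ℕ) (a : ℤ) (t : ℕ) : EE L (a * t) = (EE L a) ^ t := by
  rw [EE, EE, ← Complex.exp_nat_mul]
  congr 1
  push_cast
  ring

lemma EE_eq_one_iff {L : ℕ} (hL : 0 < L) (a : ℤ) : EE L a = 1 ↔ (L : ℤ) ∣ a := by
  rw [EE, Complex.exp_eq_one_iff]
  constructor
  · rintro ⟨m, hm⟩
    refine ⟨m, ?_⟩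
    have hLne : (L : ℂ) ≠ 0 := by exact_mod_cast hL.ne'
    have h2 : (2 * (Real.pi : ℂ) * Complex.I) ≠ 0 := by
      simpa [mul_assoc] using Complex.two_pi_I_ne_zero
    have hLne' : (L : ℂ) ≠ 0 := hLne
    have key : (a : ℂ) = (L : ℂ) * (m : ℂ) := by
      apply mul_left_cancel₀ h2
      field_simp at hm
      linear_combination (2 * (Real.pi : ℂ) * Complex.I) * hm
    exact_mod_cast key
  · rintro ⟨m, rfl⟩
    refine ⟨m, ?_⟩
    have hLne : (L : ℂ) ≠ 0 := by exact_mod_cast hL.ne'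
    push_cast
    field_simp

lemma sum_EE {L : ℕ} (hL : 0 < L) (a : ℤ) :
    ∑ t ∈ range L, EE L (a * t) = if (L : ℤ) ∣ a then (L : ℂ) else 0 := by
  have h := fun t => EE_pow L a t
  simp_rw [h]
  by_cases hd : (L : ℤ) ∣ a
  · rw [if_pos hd, (EE_eq_one_iff hL a).2 hd]
    simp
  · rw [if_neg hd]
    have hz : EE L a ≠ 1 := fun hh => hd ((EE_eq_one_iff hL a).1 hh)
    rw [geom_sum_eq hz]
    have hpow : (EE L a) ^ L = 1 := by
      rw [← EE_pow, EE_eq_one_iff hL]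
      exact ⟨a, mul_comm a L⟩
    rw [hpow]
    simp

lemma conj_EE (L : ℕ) (k : ℤ) : (starRingEnd ℂ) (EE L k) = EE L (-k) := by
  rw [EE, EE, ← Complex.exp_conj]
  congr 1
  simp only [map_div₀, map_mul, map_neg, Complex.conj_I, Complex.conj_ofReal, map_ofNat,
    map_intCast, map_natCast]
  push_cast
  ring

lemma udft_eq (L : ℕ) (c : ℕ → ℂ) (f : ℕ) :
    udft L c f = ((Real.sqrt L : ℝ) : ℂ)⁻¹ * ∑ t ∈ range L, c t * EE L (-(t * f)) := by
  rw [udft]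
  congr 1
  apply Finset.sum_congr rfl
  intro t _
  congr 1
  rw [EE]
  congr 1
  push_cast
  ring

lemma dvd_iff_eq {L : ℕ} (f g : ℕ) (hf : f ∈ range L) (hg : g ∈ range L) :
    (L : ℤ) ∣ ((f : ℤ) - g) ↔ f = g := by
  simp only [Finset.mem_range] at hf hg
  constructor
  · intro hd
    have := Int.eq_zero_of_abs_lt_dvd hd (by
      rw [abs_sub_lt_iff]; constructor <;> omega)
    omega
  · rintro rfl; simp

lemma sqrt_inv_sq {L : ℕ} (hL : 0 < L) :
    ((Real.sqrt L : ℝ) : ℂ)⁻¹ * ((Real.sqrt L : ℝ) : ℂ)⁻¹ = ((L : ℂ))⁻¹ := by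
  rw [← mul_inv]
  congr 1
  rw [← Complex.ofReal_mul, Real.mul_self_sqrt (by positivity)]
  simp

lemma inv_dft {L : ℕ} (hL : 0 < L) (c : ℕ → ℂ) (t : ℕ) (ht : t ∈ range L) :
    c t = ((Real.sqrt L : ℝ) : ℂ)⁻¹ * ∑ f ∈ range L, udft L c f * EE L (t * f) := by
  have hLne : (L : ℂ) ≠ 0 := by exact_mod_cast hL.ne'
  have key : ∑ f ∈ range L, udft L c f * EE L (t * f)
      = ((Real.sqrt L : ℝ) : ℂ)⁻¹ * ∑ u ∈ range L, c u *
          (if (L : ℤ) ∣ ((t : ℤ) - u) then (L : ℂ) else 0) := by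
    simp_rw [udft_eq, mul_assoc, ← Finset.mul_sum]
    congr 1
    simp_rw [Finset.sum_mul, mul_assoc]
    rw [Finset.sum_comm]
    apply Finset.sum_congr rfl
    intro u _
    rw [← Finset.mul_sum]
    congr 1
    rw [← sum_EE hL ((t : ℤ) - u)]
    apply Finset.sum_congr rfl
    intro f _
    rw [← EE_add]
    congr 1
    ring
  have key2 : ∑ u ∈ range L, c u *
      (if (L : ℤ) ∣ ((t : ℤ) - u) then (L : ℂ) else 0) = c t * L := by
    rw [Finset.sum_congr rfl (fun u hu => by
      rw [if_congr (dvd_iff_eq t u ht hu) rfl rfl])]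
    rw [Finset.sum_eq_single t]
    · simp
    · intro u _ hu
      rw [if_neg (fun h => hu h.symm), mul_zero]
    · intro h; exact absurd ht h
  rw [key, ← mul_assoc, sqrt_inv_sq hL, key2]
  field_simp

lemma EE_mod {L : ℕ} (hL : 0 < L) (m g : ℕ) :
    EE L (-(((m % L : ℕ) : ℤ) * g)) = EE L (-((m : ℤ) * g)) := by
  have hm : (m : ℤ) = ((m % L : ℕ) : ℤ) + L * ((m / L : ℕ) : ℤ) := by
    exact_mod_cast (Nat.mod_add_div m L).symm
  have : -((m : ℤ) * g) = -(((m % L : ℕ) : ℤ) * g) + (-(((m / L : ℕ) : ℤ) * g)) * L := by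
    rw [hm]; ring
  rw [this, EE_add, (EE_eq_one_iff hL _).2 ⟨_, mul_comm _ _⟩, mul_one]

lemma mul_conj_self (z : ℂ) : z * (starRingEnd ℂ) z = ((‖z‖ ^ 2 : ℝ) : ℂ) := by
  rw [Complex.mul_conj, Complex.normSq_eq_norm_sq]

lemma pcc_eq {L : ℕ} (hL : 0 < L) (c : ℕ → ℂ) (τ : ℕ) :
    pcc L c c τ = ∑ f ∈ range L, ((‖udft L c f‖ ^ 2 : ℝ) : ℂ) * EE L (-(τ * f)) := by
  set s : ℂ := ((Real.sqrt L : ℝ) : ℂ)⁻¹ with hs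
  set d : ℕ → ℂ := udft L c with hd
  have hconj : ∀ t : ℕ, (starRingEnd ℂ) (c ((t + τ) % L)) =
      s * ∑ g ∈ range L, (starRingEnd ℂ) (d g) * EE L (-(((t + τ : ℕ) : ℤ) * g)) := by
    intro t
    have hm : (t + τ) % L ∈ range L := Finset.mem_range.2 (Nat.mod_lt _ hL)
    rw [inv_dft hL c _ hm, map_mul, map_sum]
    have hcs : (starRingEnd ℂ) s = s := by
      rw [hs, map_inv₀, Complex.conj_ofReal]
    rw [hcs]
    congr 1
    apply Finset.sum_congr rfl
    intro g _
    rw [map_mul, conj_EE, ← EE_mod hL (t + τ) g]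
    try norm_cast
  have step : ∀ t ∈ range L, c t * (starRingEnd ℂ) (c ((t + τ) % L)) =
      ∑ f ∈ range L, ∑ g ∈ range L,
        (s * s) * ((d f * (starRingEnd ℂ) (d g)) *
          (EE L (-((τ : ℤ) * g)) * EE L (((f : ℤ) - g) * t))) := by
    intro t ht
    rw [inv_dft hL c t ht, hconj t, mul_mul_mul_comm, Finset.sum_mul_sum, Finset.mul_sum]
    apply Finset.sum_congr rfl
    intro f _
    rw [Finset.mul_sum]
    apply Finset.sum_congr rfl
    intro g _
    congr 1
    rw [mul_mul_mul_comm]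
    congr 1
    rw [← EE_add, ← EE_add]
    congr 1
    push_cast
    ring
  rw [pcc, Finset.sum_congr rfl step, Finset.sum_comm]
  have inner : ∀ f ∈ range L, (∑ t ∈ range L, ∑ g ∈ range L,
      (s * s) * ((d f * (starRingEnd ℂ) (d g)) *
        (EE L (-((τ : ℤ) * g)) * EE L (((f : ℤ) - g) * t))))
      = ((‖d f‖ ^ 2 : ℝ) : ℂ) * EE L (-(τ * f)) := by
    intro f hf
    rw [Finset.sum_comm]
    have hgsum : ∀ g ∈ range L, (∑ t ∈ range L,
        (s * s) * ((d f * (starRingEnd ℂ) (d g)) *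
          (EE L (-((τ : ℤ) * g)) * EE L (((f : ℤ) - g) * t))))
        = (s * s) * ((d f * (starRingEnd ℂ) (d g)) *
            (EE L (-((τ : ℤ) * g)) * (if (L : ℤ) ∣ ((f : ℤ) - g) then (L : ℂ) else 0))) := by
      intro g _
      rw [← Finset.mul_sum, ← Finset.mul_sum, ← Finset.mul_sum, sum_EE hL]
    rw [Finset.sum_congr rfl hgsum]
    rw [Finset.sum_congr rfl (fun g hg => by
      rw [if_congr (dvd_iff_eq f g hf hg) rfl rfl])]
    rw [Finset.sum_eq_single f]
    · rw [if_pos rfl, mul_conj_self]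
      have hss : s * s = ((L : ℂ))⁻¹ := sqrt_inv_sq hL
      have hLne : (L : ℂ) ≠ 0 := by exact_mod_cast hL.ne'
      rw [hss]
      push_cast
      field_simp
    · intro g _ hg
      rw [if_neg (fun h => hg h.symm)]
      simp
    · intro h; exact absurd hf h
  exact Finset.sum_congr rfl inner

lemma sum_pcc_sq {L : ℕ} (hL : 0 < L) (c : ℕ → ℂ) :
    ∑ τ ∈ range L, (‖pcc L c c τ‖ ^ 2 : ℝ)
      = (L : ℝ) * ∑ f ∈ range L, (‖udft L c f‖ ^ 2 : ℝ) ^ 2 := by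
  set a : ℕ → ℝ := fun f => (‖udft L c f‖ ^ 2 : ℝ) with ha
  have key : ∑ τ ∈ range L, ((‖pcc L c c τ‖ ^ 2 : ℝ) : ℂ)
      = ((L : ℝ) : ℂ) * ∑ f ∈ range L, ((a f ^ 2 : ℝ) : ℂ) := by
    have step1 : ∀ τ ∈ range L, ((‖pcc L c c τ‖ ^ 2 : ℝ) : ℂ)
        = ∑ f ∈ range L, ∑ g ∈ range L,
            ((a f : ℂ) * (a g : ℂ)) * EE L (((g : ℤ) - f) * τ) := by
      intro τ _
      rw [← mul_conj_self (pcc L c c τ), pcc_eq hL c τ, map_sum, Finset.sum_mul_sum]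
      apply Finset.sum_congr rfl
      intro f _
      apply Finset.sum_congr rfl
      intro g _
      rw [map_mul, conj_EE, Complex.conj_ofReal, mul_mul_mul_comm]
      congr 1
      rw [← EE_add]
      congr 1
      push_cast
      ring
    rw [Finset.sum_congr rfl step1, Finset.sum_comm]
    have step2 : ∀ f ∈ range L, (∑ τ ∈ range L, ∑ g ∈ range L,
        ((a f : ℂ) * (a g : ℂ)) * EE L (((g : ℤ) - f) * τ))
        = ((L : ℝ) : ℂ) * ((a f ^ 2 : ℝ) : ℂ) := by
      intro f hf
      rw [Finset.sum_comm]
      have hg : ∀ g ∈ range L, (∑ τ ∈ range L,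
          ((a f : ℂ) * (a g : ℂ)) * EE L (((g : ℤ) - f) * τ))
          = ((a f : ℂ) * (a g : ℂ)) * (if (L : ℤ) ∣ ((g : ℤ) - f) then (L : ℂ) else 0) := by
        intro g _
        rw [← Finset.mul_sum, sum_EE hL]
      rw [Finset.sum_congr rfl hg]
      rw [Finset.sum_congr rfl (fun g hg' => by
        rw [if_congr (dvd_iff_eq g f hg' hf) rfl rfl])]
      rw [Finset.sum_eq_single f]
      · rw [if_pos rfl]
        push_cast
        ring
      · intro g _ hgf
        rw [if_neg hgf, mul_zero]
      · intro h; exact absurd hf h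
    rw [Finset.sum_congr rfl step2, ← Finset.mul_sum]
  exact_mod_cast key

/-- for an SCS `C` with uniform power on admissible carriers, the maximum
autocorrelation sidelobe is at least `L·√(n/((L−n)(L−1)))`, i.e. some sidelobe
`|θ_C(τ)|` with `0 < τ < L` attains at least this value. -/
theorem stmt1 (L n : ℕ) (hn : 0 < n) (hnL : n < L) (hL2 : 2 ≤ L)
    (Ω : Finset ℕ) (hΩsub : Ω ⊆ Finset.range L) (hΩcard : Ω.card = n)
    (c : ℕ → ℂ)
    (hc1 : ∀ f ∈ Finset.range L, f ∉ Ω → ‖udft L c f‖ ^ 2 = (L : ℝ) / ((L : ℝ) - (n : ℝ)))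
    (hc0 : ∀ f ∈ Ω, udft L c f = 0) :
    ∃ τ : ℕ, 0 < τ ∧ τ < L ∧
      (L : ℝ) * Real.sqrt ((n : ℝ) / (((L : ℝ) - (n : ℝ)) * ((L : ℝ) - 1))) ≤
        ‖pcc L c c τ‖ := by
  have hL : 0 < L := lt_of_lt_of_le (by norm_num) hL2
  have hLn : (0 : ℝ) < (L : ℝ) - n := by
    have : (n : ℝ) < L := by exact_mod_cast hnL
    linarith
  have hL1 : (0 : ℝ) < (L : ℝ) - 1 := by
    have : (1 : ℝ) < L := by exact_mod_cast hL2
    linarith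
  have hcard : (Finset.range L \ Ω).card = L - n := by
    rw [Finset.card_sdiff_of_subset hΩsub, Finset.card_range, hΩcard]
  -- sums over the power spectrum
  have hsum_subset : ∀ F : ℕ → ℝ, (∀ f ∈ Ω, F f = 0) →
      ∑ f ∈ range L, F f = ∑ f ∈ range L \ Ω, F f := by
    intro F h
    refine (Finset.sum_subset Finset.sdiff_subset ?_).symm
    intro f hf hf'
    apply h
    simp only [Finset.mem_sdiff, not_and, not_not] at hf'
    exact hf' hf
  have ha0 : ∀ f ∈ Ω, (‖udft L c f‖ ^ 2 : ℝ) = 0 := by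
    intro f hf; rw [hc0 f hf]; simp
  have hA : ∑ f ∈ range L, (‖udft L c f‖ ^ 2 : ℝ) = (L : ℝ) := by
    rw [hsum_subset _ ha0]
    rw [Finset.sum_eq_card_nsmul (b := (L : ℝ) / ((L : ℝ) - n)) (fun f hf => by
      rw [Finset.mem_sdiff] at hf
      exact hc1 f hf.1 hf.2)]
    rw [hcard, nsmul_eq_mul]
    have : ((L - n : ℕ) : ℝ) = (L : ℝ) - n := by
      push_cast [Nat.cast_sub hnL.le]; ring
    rw [this]
    field_simp
  have hB : ∑ f ∈ range L, ((‖udft L c f‖ ^ 2 : ℝ)) ^ 2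
      = (L : ℝ) ^ 2 / ((L : ℝ) - n) := by
    rw [hsum_subset _ (fun f hf => by rw [ha0 f hf]; ring)]
    rw [Finset.sum_eq_card_nsmul (b := ((L : ℝ) / ((L : ℝ) - n)) ^ 2) (fun f hf => by
      rw [Finset.mem_sdiff] at hf
      rw [hc1 f hf.1 hf.2])]
    rw [hcard, nsmul_eq_mul]
    have : ((L - n : ℕ) : ℝ) = (L : ℝ) - n := by
      push_cast [Nat.cast_sub hnL.le]; ring
    rw [this]
    field_simp
  -- value at τ = 0
  have hpcc0 : pcc L c c 0 = ((L : ℝ) : ℂ) := by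
    rw [pcc_eq hL c 0]
    have : ∀ f ∈ range L, ((‖udft L c f‖ ^ 2 : ℝ) : ℂ) * EE L (-((0 : ℕ) * f))
        = ((‖udft L c f‖ ^ 2 : ℝ) : ℂ) := by
      intro f _
      norm_num [EE]
    rw [Finset.sum_congr rfl this, ← Complex.ofReal_sum, hA]
  have hpcc0norm : (‖pcc L c c 0‖ ^ 2 : ℝ) = (L : ℝ) ^ 2 := by
    rw [hpcc0, Complex.norm_real, Real.norm_eq_abs, _root_.sq_abs]
  -- split the sum over range L
  have hins : Finset.range L = insert 0 (Finset.Ioo 0 L) := by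
    ext x
    simp only [Finset.mem_range, Finset.mem_insert, Finset.mem_Ioo]
    omega
  have hsidelobe : ∑ τ ∈ Finset.Ioo 0 L, (‖pcc L c c τ‖ ^ 2 : ℝ)
      = (L : ℝ) ^ 2 * n / ((L : ℝ) - n) := by
    have h0 : (0 : ℕ) ∉ Finset.Ioo 0 L := by simp
    have := sum_pcc_sq hL c
    rw [hB, hins, Finset.sum_insert h0, hpcc0norm] at this
    have hLne : (L : ℝ) - n ≠ 0 := hLn.ne'
    field_simp at this ⊢
    linarith
  -- averaging
  set b : ℝ := (L : ℝ) ^ 2 * n / (((L : ℝ) - n) * ((L : ℝ) - 1)) with hb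
  have hcardIoo : (Finset.Ioo 0 L).card = L - 1 := by
    rw [Nat.card_Ioo]
    omega
  have hne : (Finset.Ioo 0 L).Nonempty := ⟨1, by simp; omega⟩
  have havg : ∃ τ ∈ Finset.Ioo 0 L, b ≤ (‖pcc L c c τ‖ ^ 2 : ℝ) := by
    apply Finset.exists_le_of_sum_le hne
    rw [Finset.sum_const, hcardIoo, nsmul_eq_mul, hsidelobe]
    have hL1' : ((L - 1 : ℕ) : ℝ) = (L : ℝ) - 1 := by
      push_cast [Nat.cast_sub (by omega : 1 ≤ L)]
      ring
    rw [hL1', hb]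
    apply le_of_eq
    field_simp
  obtain ⟨τ, hτ, hbound⟩ := havg
  rw [Finset.mem_Ioo] at hτ
  refine ⟨τ, hτ.1, hτ.2, ?_⟩
  have hr : (0 : ℝ) ≤ (n : ℝ) / (((L : ℝ) - n) * ((L : ℝ) - 1)) := by positivity
  have hb2 : b = (L : ℝ) ^ 2 * ((n : ℝ) / (((L : ℝ) - n) * ((L : ℝ) - 1))) := by
    rw [hb]; ring
  have h1 : (L : ℝ) * Real.sqrt ((n : ℝ) / (((L : ℝ) - n) * ((L : ℝ) - 1)))
      = Real.sqrt b := by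
    rw [hb2, Real.sqrt_mul (sq_nonneg _), Real.sqrt_sq (by positivity : (0:ℝ) ≤ (L:ℝ))]
  rw [h1]
  calc Real.sqrt b ≤ Real.sqrt (‖pcc L c c τ‖ ^ 2) := Real.sqrt_le_sqrt hbound
    _ = ‖pcc L c c τ‖ := Real.sqrt_sq (norm_nonneg _)
end

section
/- Let N ≥ 2, let π be a permutation of Z_N, let L = N(N+1), and define the length-L sequence C by c_i = ω_{N+1}^{π(i mod N)·i} for 0 ≤ i < L, where ω_{N+1} = e^{2πi/(N+1)}. Then for every τ with 0 < τ < L, the periodic autocorrelation satisfies |θ_C(τ)| = N+1 if N divides τ, and |θ_C(τ)| = 0 otherwise. -/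
lemma aux_sum_range_zmod {M : Type*} [AddCommMonoid M] (n : ℕ) [NeZero n] (f : ZMod n → M) :
    ∑ a ∈ Finset.range n, f (a : ZMod n) = ∑ x : ZMod n, f x := by
  refine Finset.sum_nbij' (i := fun a => (a : ZMod n)) (j := ZMod.val) ?_ ?_ ?_ ?_ ?_
  · intro a _; exact Finset.mem_univ _
  · intro x _; exact Finset.mem_range.mpr (ZMod.val_lt x)
  · intro a ha; exact ZMod.val_cast_of_lt (Finset.mem_range.mp ha)
  · intro x _; exact ZMod.natCast_rightInverse x
  · intro a _; rfl

lemma aux_sum_range_mul {M : Type*} [AddCommMonoid M] (m n : ℕ) (f : ℕ → M) :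
    ∑ t ∈ Finset.range (m * n), f t
      = ∑ a ∈ Finset.range m, ∑ b ∈ Finset.range n, f (a * n + b) := by
  rcases Nat.eq_zero_or_pos n with hn | hn
  · subst hn; simp
  rw [← Finset.sum_product']
  refine Finset.sum_nbij' (i := fun t => (t / n, t % n)) (j := fun p => p.1 * n + p.2) ?_ ?_ ?_ ?_ ?_
  · intro t ht
    simp only [Finset.mem_range] at ht
    simp only [Finset.mem_product, Finset.mem_range]
    exact ⟨Nat.div_lt_of_lt_mul (by rwa [mul_comm] at ht), Nat.mod_lt _ hn⟩
  · intro p hp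
    simp only [Finset.mem_product, Finset.mem_range] at hp
    simp only [Finset.mem_range]
    calc p.1 * n + p.2 < p.1 * n + n := by omega
      _ = (p.1 + 1) * n := by ring
      _ ≤ m * n := Nat.mul_le_mul_right n (by omega)
  · intro t _; exact Nat.div_add_mod' t n
  · intro p hp
    simp only [Finset.mem_product, Finset.mem_range] at hp
    have h1 : (p.1 * n + p.2) / n = p.1 := by
      rw [mul_comm, Nat.mul_add_div hn, Nat.div_eq_of_lt hp.2, add_zero]
    have h2 : (p.1 * n + p.2) % n = p.2 := by
      rw [mul_comm, Nat.mul_add_mod, Nat.mod_eq_of_lt hp.2]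
    simp [h1, h2]
  · intro t _; exact congrArg f (Nat.div_add_mod' t n).symm

/-- let `N ≥ 2`, `σ` a permutation of `Z_N`, `L = N(N+1)`, and
`c_i = ω_{N+1}^{σ(i mod N)·i}`. Then for `0 < τ < L`, the periodic autocorrelation
satisfies `|θ_C(τ)| = N+1` if `N ∣ τ`, and `|θ_C(τ)| = 0` otherwise. -/
theorem stmt7 (N : ℕ) (hN : 2 ≤ N) (σ : Equiv.Perm (ZMod N))
    (c : ℕ → ℂ)
    (hc : ∀ i < N * (N + 1), c i = Complex.exp (2 * (Real.pi : ℂ) * Complex.I *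
      ((((σ ((i : ℕ) : ZMod N)).val * i : ℕ)) : ℂ) / (((N + 1 : ℕ)) : ℂ)))
    (τ : ℕ) (hτ1 : 0 < τ) (hτ2 : τ < N * (N + 1)) :
    (N ∣ τ → ‖pcc (N * (N + 1)) c c τ‖ = (N : ℝ) + 1) ∧
    (¬ N ∣ τ → ‖pcc (N * (N + 1)) c c τ‖ = 0) := by
  haveI : NeZero N := ⟨by omega⟩
  set L := N * (N + 1) with hLdef
  have hLpos : 0 < L := by positivity
  set ζ : ℂ := Complex.exp (2 * (Real.pi : ℂ) * Complex.I / ((N + 1 : ℕ) : ℂ)) with hζdef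
  have hprim : IsPrimitiveRoot ζ (N + 1) := Complex.isPrimitiveRoot_exp (N + 1) (by omega)
  have hζ0 : ζ ≠ 0 := Complex.exp_ne_zero _
  have hdvd : ∀ k : ℤ, ((N : ℤ) + 1) ∣ k → ζ ^ k = 1 := by
    intro k hk
    rw [hprim.zpow_eq_one_iff_dvd]
    exact_mod_cast hk
  have hcong : ∀ k k' : ℤ, ((N : ℤ) + 1) ∣ (k - k') → ζ ^ k = ζ ^ k' := by
    intro k k' h
    rw [show k = k' + (k - k') by ring, zpow_add₀ hζ0, hdvd _ h, mul_one]
  have hnorm : ‖ζ‖ = 1 :=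
    Complex.norm_eq_one_of_pow_eq_one hprim.pow_eq_one (by omega)
  have hconj : (starRingEnd ℂ) ζ = ζ⁻¹ := (Complex.inv_eq_conj hnorm).symm
  -- c as power of ζ
  have hcz : ∀ i, i < L → c i = ζ ^ ((σ (i : ZMod N)).val * i) := by
    intro i hi
    rw [hc i hi, hζdef, ← Complex.exp_nat_mul]
    congr 1
    push_cast
    ring
  -- casts mod L
  have hLcast : ((L : ℕ) : ZMod N) = 0 := by
    rw [hLdef]; push_cast; simp
  have hmodcast : ∀ a : ℕ, (((a % L : ℕ)) : ZMod N) = (a : ZMod N) := by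
    intro a
    conv_rhs => rw [← Nat.mod_add_div a L]
    push_cast [hLcast]
    ring
  set m : ZMod N → ℕ := fun x => (σ x).val with hm
  have hmlt : ∀ x : ZMod N, m x < N := fun x => ZMod.val_lt _
  set v := τ % (N + 1) with hv
  set G : ZMod N → ℕ → ℂ := fun x b =>
    ζ ^ ((m x * b : ℤ) - (m (x + (τ : ZMod N)) * (b + v) : ℤ)) with hG
  -- key rewriting of the correlation sum
  have key : pcc L c c τ = ∑ x : ZMod N, ∑ b ∈ Finset.range (N + 1), G x b := by
    have step1 : pcc L c c τ = ∑ t ∈ Finset.range L,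
        ζ ^ (((m (t : ZMod N) * t : ℕ) : ℤ)
          - ((m ((t : ZMod N) + (τ : ZMod N)) * ((t + τ) % L) : ℕ) : ℤ)) := by
      unfold pcc
      apply Finset.sum_congr rfl
      intro t ht
      have ht' : t < L := Finset.mem_range.mp ht
      have hmod : (t + τ) % L < L := Nat.mod_lt _ hLpos
      have habgen : ∀ A B : ℕ, ζ ^ A * ζ⁻¹ ^ B = ζ ^ ((A : ℤ) - (B : ℤ)) := by
        intro A B
        rw [← zpow_natCast ζ A, ← zpow_natCast ζ⁻¹ B, inv_zpow', ← zpow_add₀ hζ0,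
          ← sub_eq_add_neg]
      rw [hcz t ht', hcz _ hmod, hmodcast (t + τ), Nat.cast_add]
      rw [map_pow, hconj, habgen]
    rw [step1, aux_sum_range_mul N (N + 1)]
    rw [Finset.sum_comm]
    have step3 : ∀ b ∈ Finset.range (N + 1),
        (∑ a ∈ Finset.range N,
          ζ ^ (((m ((a * (N+1) + b : ℕ) : ZMod N) * (a * (N+1) + b) : ℕ) : ℤ)
            - ((m (((a * (N+1) + b : ℕ) : ZMod N) + (τ : ZMod N)) * ((a * (N+1) + b + τ) % L) : ℕ) : ℤ)))
        = ∑ x : ZMod N, G x b := by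
      intro b hb
      have step2 : ∀ a ∈ Finset.range N,
          ζ ^ (((m ((a * (N+1) + b : ℕ) : ZMod N) * (a * (N+1) + b) : ℕ) : ℤ)
            - ((m (((a * (N+1) + b : ℕ) : ZMod N) + (τ : ZMod N)) * ((a * (N+1) + b + τ) % L) : ℕ) : ℤ))
          = G (((a : ℕ) : ZMod N) + ((b : ℕ) : ZMod N)) b := by
        intro a _
        have hx : ((a * (N+1) + b : ℕ) : ZMod N) = ((a : ℕ) : ZMod N) + ((b : ℕ) : ZMod N) := by
          push_cast
          rw [ZMod.natCast_self]
          ring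
        rw [hx, hG]
        set x := ((a : ℕ) : ZMod N) + ((b : ℕ) : ZMod N) with hxdef
        apply hcong
        have h1 : ((a * (N+1) + b : ℕ) : ℤ) - (b : ℤ) = ((N:ℤ)+1) * a := by push_cast; ring
        have h2 : (((a * (N+1) + b + τ) % L : ℕ) : ℤ) - ((b : ℤ) + (v : ℤ))
            = ((N:ℤ)+1) * ((N:ℤ) * (((a * (N+1) + b + τ) / L : ℕ) : ℤ) * (-1) + a + ((τ / (N+1) : ℕ) : ℤ)) := by
          have e1 : ((a * (N+1) + b + τ : ℕ) : ℤ)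
              = (((a * (N+1) + b + τ) % L : ℕ) : ℤ) + (L : ℤ) * (((a * (N+1) + b + τ) / L : ℕ) : ℤ) := by
            exact_mod_cast congrArg (Nat.cast : ℕ → ℤ) (Nat.mod_add_div (a * (N+1) + b + τ) L).symm
          have e2 : ((τ : ℕ) : ℤ) = (v : ℤ) + ((N : ℤ) + 1) * ((τ / (N+1) : ℕ) : ℤ) := by
            rw [hv]
            exact_mod_cast congrArg (Nat.cast : ℕ → ℤ) (Nat.mod_add_div τ (N + 1)).symm
          have e3 : ((L : ℕ) : ℤ) = (N : ℤ) * ((N:ℤ)+1) := by rw [hLdef]; push_cast; ring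
          generalize hM : (((a * (N+1) + b + τ) % L : ℕ) : ℤ) = M at e1 ⊢
          generalize hD : (((a * (N+1) + b + τ) / L : ℕ) : ℤ) = D at e1 ⊢
          generalize hq : ((τ / (N+1) : ℕ) : ℤ) = q at e2 ⊢
          rw [e3] at e1
          push_cast at e1
          linear_combination e2 - e1
        refine ⟨(m x : ℤ) * a - (m (x + (τ : ZMod N)) : ℤ) *
          ((N:ℤ) * (((a * (N+1) + b + τ) / L : ℕ) : ℤ) * (-1) + a + ((τ / (N+1) : ℕ) : ℤ)), ?_⟩
        push_cast at h1 h2 ⊢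
        linear_combination (m x : ℤ) * h1 - (m (x + (τ : ZMod N)) : ℤ) * h2
      rw [Finset.sum_congr rfl step2]
      rw [aux_sum_range_zmod N (fun y => G (y + ((b : ℕ) : ZMod N)) b)]
      exact Fintype.sum_bijective _ (Equiv.addRight ((b : ℕ) : ZMod N)).bijective _ _ (fun x => rfl)
    rw [Finset.sum_congr rfl step3]
    exact Finset.sum_comm
  constructor
  · -- N ∣ τ
    intro hNτ
    have hτz : ((τ : ℕ) : ZMod N) = 0 := (ZMod.natCast_eq_zero_iff τ N).mpr hNτ
    obtain ⟨j, hj⟩ := hNτ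
    have hj1 : 1 ≤ j := by
      rcases Nat.eq_zero_or_pos j with h | h
      · subst h; simp at hj; omega
      · exact h
    have hjN : j ≤ N := by
      by_contra h
      push_neg at h
      have : N * (N + 1) ≤ N * j := Nat.mul_le_mul_left N h
      omega
    have hv1 : 0 < v := by
      rcases Nat.eq_zero_or_pos v with h | h
      · exfalso
        have hdv : (N + 1) ∣ τ := Nat.dvd_of_mod_eq_zero (by rw [← hv]; exact h.symm ▸ rfl)
        rw [hj] at hdv
        have hco : Nat.Coprime (N + 1) N := by simp
        have hdj : (N + 1) ∣ j := hco.dvd_of_dvd_mul_left hdv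
        have := Nat.le_of_dvd (by omega) hdj
        omega
      · exact h
    have hv2 : v < N + 1 := Nat.mod_lt _ (by omega)
    set u : ℂ := ζ ^ (-(v : ℤ)) with hu
    have hu0 : u ≠ 0 := zpow_ne_zero _ hζ0
    have hu1 : u ≠ 1 := by
      intro h
      have h1 : ((N + 1 : ℕ) : ℤ) ∣ (-(v : ℤ)) := (hprim.zpow_eq_one_iff_dvd _).mp h
      have h2 : ((N : ℤ) + 1) ∣ (v : ℤ) := by
        have := (dvd_neg.mpr h1)
        rw [neg_neg] at this
        exact_mod_cast this
      have := Int.le_of_dvd (by exact_mod_cast hv1) h2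
      omega
    have hGx : ∀ (x : ZMod N) (b : ℕ), G x b = ζ ^ (-((m x : ℤ) * v)) := by
      intro x b
      rw [hG]
      simp only [hτz, add_zero]
      congr 1
      push_cast
      ring
    rw [key]
    have hsum1 : ∀ x : ZMod N, ∑ b ∈ Finset.range (N + 1), G x b
        = ((N + 1 : ℕ) : ℂ) * ζ ^ (-((m x : ℤ) * v)) := by
      intro x
      rw [Finset.sum_congr rfl (fun b _ => hGx x b), Finset.sum_const, Finset.card_range,
        nsmul_eq_mul]
    rw [Finset.sum_congr rfl (fun x _ => hsum1 x), ← Finset.mul_sum]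
    have hs2 : ∑ x : ZMod N, ζ ^ (-((m x : ℤ) * v)) = ∑ y : ZMod N, ζ ^ (-((ZMod.val y : ℤ) * v)) :=
      Fintype.sum_bijective σ σ.bijective _ _ (fun x => rfl)
    have hs3 : ∑ y : ZMod N, ζ ^ (-((ZMod.val y : ℤ) * v)) = ∑ a ∈ Finset.range N, u ^ a := by
      rw [← aux_sum_range_zmod N (fun y => ζ ^ (-((ZMod.val y : ℤ) * v)))]
      apply Finset.sum_congr rfl
      intro a ha
      rw [ZMod.val_cast_of_lt (Finset.mem_range.mp ha), hu, ← zpow_natCast (ζ ^ (-(v:ℤ))) a,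
        ← zpow_mul]
      congr 1
      ring
    have huNv : u ^ N = u⁻¹ :=
      eq_inv_of_mul_eq_one_left (by
        rw [← pow_succ, hu, ← zpow_natCast, ← zpow_mul]
        apply hdvd
        exact ⟨-(v : ℤ), by push_cast; ring⟩)
    have hgeom : ∑ a ∈ Finset.range N, u ^ a = -u⁻¹ := by
      rw [geom_sum_eq hu1, huNv]
      have hne : u - 1 ≠ 0 := sub_ne_zero.mpr hu1
      field_simp
      ring
    rw [hs2, hs3, hgeom]
    rw [norm_mul, norm_neg, norm_inv, hu, norm_zpow, hnorm, one_zpow, inv_one, mul_one,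
      Complex.norm_natCast]
    push_cast
    ring
  · -- ¬ N ∣ τ
    intro hNτ
    have hτz : ((τ : ℕ) : ZMod N) ≠ 0 := fun h => hNτ ((ZMod.natCast_eq_zero_iff τ N).mp h)
    rw [key]
    have hzero : ∀ x : ZMod N, ∑ b ∈ Finset.range (N + 1), G x b = 0 := by
      intro x
      have hne : m x ≠ m (x + (τ : ZMod N)) := by
        intro h
        have h1 : σ x = σ (x + (τ : ZMod N)) := ZMod.val_injective N h
        have h2 : x = x + (τ : ZMod N) := σ.injective h1
        exact hτz (add_eq_left.mp h2.symm)
      set d : ℤ := (m x : ℤ) - (m (x + (τ : ZMod N)) : ℤ) with hd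
      have hw1 : ζ ^ d ≠ 1 := by
        intro h
        have hdvd' : ((N : ℤ) + 1) ∣ d := by
          have := (hprim.zpow_eq_one_iff_dvd d).mp h
          exact_mod_cast this
        have hd0 : d ≠ 0 := sub_ne_zero.mpr (by exact_mod_cast hne)
        have h3 : ((N : ℤ) + 1) ≤ |d| := Int.le_of_dvd (abs_pos.mpr hd0) ((dvd_abs _ _).mpr hdvd')
        have hb1 : (m x : ℤ) < N := by exact_mod_cast hmlt x
        have hb2 : (m (x + (τ : ZMod N)) : ℤ) < N := by exact_mod_cast hmlt _
        have hb3 : (0 : ℤ) ≤ (m x : ℤ) := Int.natCast_nonneg _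
        have hb4 : (0 : ℤ) ≤ (m (x + (τ : ZMod N)) : ℤ) := Int.natCast_nonneg _
        have h4 : |d| < (N : ℤ) + 1 := by rw [abs_lt]; omega
        omega
      have hGb : ∀ b ∈ Finset.range (N + 1),
          G x b = ζ ^ (-((m (x + (τ : ZMod N)) : ℤ) * v)) * (ζ ^ d) ^ b := by
        intro b _
        rw [hG, ← zpow_natCast (ζ ^ d) b, ← zpow_mul, ← zpow_add₀ hζ0]
        rw [hd]
        congr 1
        push_cast
        ring
      rw [Finset.sum_congr rfl hGb, ← Finset.mul_sum, geom_sum_eq hw1]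
      have hwpow : (ζ ^ d) ^ (N + 1) = 1 := by
        rw [← zpow_natCast (ζ ^ d), ← zpow_mul]
        apply hdvd
        exact ⟨d, by push_cast; ring⟩
      rw [hwpow]
      simp
    rw [Finset.sum_congr rfl (fun x _ => hzero x), Finset.sum_const_zero, norm_zero]
end

section
/- Let N ≥ 2, let π_0,…,π_{M-1} be the rows of an M×N circular Florentine rectangle over Z_N, let L = N(N+1), and for each 0 ≤ m < M define the length-L sequence C^m by c^m_i = ω_{N+1}^{π_m(i mod N)·i} for 0 ≤ i < L, where ω_{N+1} = e^{2πi/(N+1)}. Then for all 0 ≤ m ≠ m′ < M and all 0 ≤ τ < L, the periodic cross-correlation satisfies |θ_{C^m, C^{m′}}(τ)| ∈ {0, N+1}. -/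
/-- An `M × N` circular Florentine rectangle over `Z_N`. -/
def IsCFR (N M : ℕ) (σ : Fin M → Equiv.Perm (ZMod N)) : Prop :=
  ∀ m : ZMod N, m ≠ 0 → ∀ i j : Fin M, ∀ x y : ZMod N,
    σ i x = σ j y → σ i (x + m) = σ j (y + m) → i = j ∧ x = y

private lemma powModAux (z : ℂ) (K : ℕ) (hz : z ^ K = 1) {a b : ℕ}
    (hab : a ≡ b [MOD K]) : z ^ a = z ^ b := by
  have h : ∀ c : ℕ, z ^ c = z ^ (c % K) := by
    intro c
    conv_lhs => rw [← Nat.mod_add_div c K]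
    rw [pow_add, pow_mul, hz, one_pow, mul_one]
  rw [h a, h b, hab]

private lemma sumZModVal (K : ℕ) [NeZero K] (f : ℕ → ℂ) :
    ∑ u : ZMod K, f u.val = ∑ i ∈ Finset.range K, f i := by
  refine Finset.sum_nbij' (fun u => u.val) (fun i => (i : ZMod K)) ?_ ?_ ?_ ?_ ?_
  · intro a _; exact Finset.mem_range.mpr (ZMod.val_lt a)
  · intro a _; exact Finset.mem_univ _
  · intro a _; simp [ZMod.natCast_val, ZMod.cast_id]
  · intro a ha; exact ZMod.val_cast_of_lt (Finset.mem_range.mp ha)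
  · intro a _; rfl

private lemma crtComponents (N K : ℕ) [NeZero N] [NeZero K] (h : Nat.Coprime N K)
    (p : ZMod N × ZMod K) :
    ((((ZMod.chineseRemainder h).symm p).val : ZMod N) = p.1) ∧
    ((((ZMod.chineseRemainder h).symm p).val : ZMod K) = p.2) := by
  have h2 := (ZMod.chineseRemainder h).apply_symm_apply p
  set t := (ZMod.chineseRemainder h).symm p with ht
  rw [ZMod.chineseRemainder] at h2
  simp only [RingEquiv.coe_mk, Equiv.coe_fn_mk, ZMod.castHom_apply] at h2
  rw [← ZMod.natCast_val t, Prod.ext_iff, Prod.fst_natCast, Prod.snd_natCast] at h2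
  exact h2

/-- let `N ≥ 2`, `σ 0, …, σ (M-1)` the rows of an `M × N` CFR over `Z_N`,
`L = N(N+1)`, and `c^m_i = ω_{N+1}^{σ_m(i mod N)·i}`. Then for all `m ≠ m'` and all
`0 ≤ τ < L`, the periodic cross-correlation satisfies `|θ_{C^m,C^{m'}}(τ)| ∈ {0, N+1}`. -/
theorem stmt8 (N M : ℕ) (hN : 2 ≤ N) (σ : Fin M → Equiv.Perm (ZMod N))
    (hCFR : IsCFR N M σ)
    (C : Fin M → ℕ → ℂ)
    (hC : ∀ m : Fin M, ∀ i < N * (N + 1),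
      C m i = Complex.exp (2 * (Real.pi : ℂ) * Complex.I *
        ((((σ m ((i : ℕ) : ZMod N)).val * i : ℕ)) : ℂ) / (((N + 1 : ℕ)) : ℂ)))
    (m m' : Fin M) (hmm : m ≠ m') (τ : ℕ) (hτ : τ < N * (N + 1)) :
    ‖pcc (N * (N + 1)) (C m) (C m') τ‖ = 0 ∨
      ‖pcc (N * (N + 1)) (C m) (C m') τ‖ = (N : ℝ) + 1 := by
  classical
  set K := N + 1 with hKdef
  have hN0 : 0 < N := by omega
  have hK0 : 0 < K := by omega
  haveI : NeZero N := ⟨hN0.ne'⟩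
  haveI : NeZero K := ⟨hK0.ne'⟩
  have hL0 : 0 < N * K := Nat.mul_pos hN0 hK0
  haveI : NeZero (N * K) := ⟨hL0.ne'⟩
  set ω : ℂ := Complex.exp (2 * (Real.pi : ℂ) * Complex.I / (K : ℂ)) with hωdef
  have hprim : IsPrimitiveRoot ω K := Complex.isPrimitiveRoot_exp K hK0.ne'
  have hωK : ω ^ K = 1 := hprim.pow_eq_one
  set η : ℂ := (starRingEnd ℂ) ω with hηdef
  have hηK : η ^ K = 1 := by rw [hηdef, ← map_pow, hωK, map_one]
  have hωabs : ‖ω‖ = 1 := by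
    have harg : (2 * (Real.pi : ℂ) * Complex.I / (K : ℂ))
        = ((2 * Real.pi / K : ℝ) : ℂ) * Complex.I := by push_cast; ring
    rw [hωdef, harg, Complex.norm_exp_ofReal_mul_I]
  have hηabs : ‖η‖ = 1 := by rw [hηdef]; rw [Complex.norm_conj]; exact hωabs
  have hηinv : η = ω⁻¹ := by
    refine eq_inv_of_mul_eq_one_right ?_
    rw [hηdef, Complex.mul_conj, ← Complex.sq_norm, hωabs]
    norm_num
  set e1 : ZMod N → ℕ := fun x => (σ m x).val with he1
  set e2 : ZMod N → ℕ := fun x => (σ m' (x + (τ : ZMod N))).val with he2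
  set g : ZMod N → ℕ → ℂ := fun x u => ω ^ (e1 x * u) * η ^ (e2 x * (u + τ)) with hg
  have hkey : ∀ a : ℕ,
      Complex.exp (2 * (Real.pi : ℂ) * Complex.I * (a : ℂ) / (K : ℂ)) = ω ^ a := by
    intro a
    rw [hωdef, ← Complex.exp_nat_mul]
    congr 1
    ring
  -- Step A
  have hstepA : pcc (N * K) (C m) (C m') τ
      = ∑ t ∈ Finset.range (N * K), g ((t : ZMod N)) (((t : ZMod K)).val) := by
    unfold pcc
    refine Finset.sum_congr rfl ?_
    intro t ht
    have ht' : t < N * K := Finset.mem_range.mp ht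
    have htτ : (t + τ) % (N * K) < N * K := Nat.mod_lt _ hL0
    rw [hC m t ht', hC m' _ htτ, hkey, hkey, map_pow]
    have hidx : ((((t + τ) % (N * K) : ℕ)) : ZMod N) = (t : ZMod N) + (τ : ZMod N) := by
      have h1 : ((((t + τ) % (N * K) : ℕ)) : ZMod N) = (((t + τ : ℕ)) : ZMod N) :=
        (ZMod.natCast_eq_natCast_iff _ _ _).mpr (Nat.mod_mod_of_dvd _ ⟨K, rfl⟩)
      rw [h1]; push_cast; ring
    rw [hidx]
    have hA : ω ^ ((σ m (t : ZMod N)).val * t)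
        = ω ^ (e1 (t : ZMod N) * ((t : ZMod K)).val) := by
      refine powModAux ω K hωK ?_
      have : ((t : ZMod K)).val = t % K := ZMod.val_natCast K t
      rw [he1, this]
      exact Nat.ModEq.mul_left _ (Nat.mod_modEq t K).symm
    have hB : ((starRingEnd ℂ) ω) ^ ((σ m' ((t : ZMod N) + (τ : ZMod N))).val * ((t + τ) % (N * K)))
        = η ^ (e2 (t : ZMod N) * (((t : ZMod K)).val + τ)) := by
      rw [← hηdef]
      refine powModAux η K hηK ?_
      have h2 : ((t : ZMod K)).val = t % K := ZMod.val_natCast K t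
      rw [he2, h2]
      refine Nat.ModEq.mul_left _ ?_
      calc (t + τ) % (N * K) ≡ t + τ [MOD K] :=
            Nat.mod_mod_of_dvd _ ⟨N, Nat.mul_comm N K⟩
        _ ≡ t % K + τ [MOD K] := Nat.ModEq.add_right τ (Nat.mod_modEq t K).symm
    rw [hA, hB]
  -- Step B
  have hcop : Nat.Coprime N K := by
    rw [hKdef, Nat.add_comm]
    exact Nat.coprime_add_self_right.mpr (Nat.coprime_one_right N)
  have hstepB : ∑ t ∈ Finset.range (N * K), g ((t : ZMod N)) (((t : ZMod K)).val)
      = ∑ x : ZMod N, ∑ u : ZMod K, g x u.val := by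
    rw [← Fintype.sum_prod_type']
    rw [← sumZModVal (N * K) (fun t => g ((t : ZMod N)) (((t : ZMod K)).val))]
    refine Fintype.sum_equiv (ZMod.chineseRemainder hcop).toEquiv _ _ ?_
    intro t
    obtain ⟨h1, h2⟩ := crtComponents N K hcop ((ZMod.chineseRemainder hcop) t)
    simp only [RingEquiv.toEquiv_eq_coe, EquivLike.coe_coe] at *
    rw [RingEquiv.symm_apply_apply] at h1 h2
    rw [h1, h2]
  -- Step C : inner geometric sum
  have hinner : ∀ x : ZMod N, ∑ u : ZMod K, g x u.val
      = (if σ m x = σ m' (x + (τ : ZMod N)) then (K : ℂ) else 0) * η ^ (e2 x * τ) := by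
    intro x
    set z : ℂ := ω ^ e1 x * η ^ e2 x with hz
    have hterm : ∀ u : ℕ, g x u = z ^ u * η ^ (e2 x * τ) := by
      intro u
      simp only [hg, hz, Nat.mul_add, pow_add, mul_pow, pow_mul]
      ring
    have hzK : z ^ K = 1 := by
      rw [hz, mul_pow, ← pow_mul, ← pow_mul, Nat.mul_comm (e1 x) K, Nat.mul_comm (e2 x) K,
        pow_mul, pow_mul, hωK, hηK, one_pow, one_pow, one_mul]
    have hωne : ω ≠ 0 := Complex.exp_ne_zero _
    have hz1 : z = 1 ↔ σ m x = σ m' (x + (τ : ZMod N)) := by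
      rw [hz, hηinv, inv_pow, mul_inv_eq_one₀ (pow_ne_zero _ hωne)]
      constructor
      · intro h
        have he : e1 x = e2 x :=
          hprim.pow_inj (lt_trans (ZMod.val_lt _) (Nat.lt_succ_self N))
            (lt_trans (ZMod.val_lt _) (Nat.lt_succ_self N)) h
        exact ZMod.val_injective N he
      · intro h; simp only [he1, he2]; rw [h]
    have hgeom : ∑ i ∈ Finset.range K, z ^ i = if z = 1 then (K : ℂ) else 0 := by
      by_cases h : z = 1
      · simp [h]
      · rw [if_neg h, geom_sum_eq h, hzK, sub_self, zero_div]
    calc ∑ u : ZMod K, g x u.val = ∑ u : ZMod K, z ^ u.val * η ^ (e2 x * τ) := by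
          exact Finset.sum_congr rfl fun u _ => hterm u.val
      _ = (∑ u : ZMod K, z ^ u.val) * η ^ (e2 x * τ) := by rw [Finset.sum_mul]
      _ = (∑ i ∈ Finset.range K, z ^ i) * η ^ (e2 x * τ) :=
          congrArg (· * η ^ (e2 x * τ)) (sumZModVal K (fun i => z ^ i))
      _ = (if σ m x = σ m' (x + (τ : ZMod N)) then (K : ℂ) else 0) * η ^ (e2 x * τ) := by
          rw [hgeom]; simp only [hz1]
  -- assemble
  set S : Finset (ZMod N) :=
    Finset.univ.filter (fun x => σ m x = σ m' (x + (τ : ZMod N))) with hS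
  have hmain : pcc (N * K) (C m) (C m') τ = (K : ℂ) * ∑ x ∈ S, η ^ (e2 x * τ) := by
    rw [hstepA, hstepB]
    rw [Finset.sum_congr rfl (fun x _ => hinner x)]
    rw [Finset.mul_sum, hS, Finset.sum_filter]
    refine Finset.sum_congr rfl ?_
    intro x _
    by_cases h : σ m x = σ m' (x + (τ : ZMod N)) <;> simp [h]
  have hcard : S.card ≤ 1 := by
    refine Finset.card_le_one.mpr ?_
    intro a ha b hb
    simp only [hS, Finset.mem_filter, Finset.mem_univ, true_and] at ha hb
    by_contra hab
    have hd : b - a ≠ 0 := sub_ne_zero.mpr (fun h => hab h.symm)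
    have hshift1 : σ m (a + (b - a)) = σ m' ((a + (τ : ZMod N)) + (b - a)) := by
      have e1' : a + (b - a) = b := by ring
      have e2' : (a + (τ : ZMod N)) + (b - a) = b + (τ : ZMod N) := by ring
      rw [e1', e2', hb]
    exact hmm ((hCFR (b - a) hd m m' a (a + (τ : ZMod N)) ha hshift1).1)
  interval_cases h : S.card
  · have hSempty : S = ∅ := Finset.card_eq_zero.mp h
    left
    rw [hmain, hSempty, Finset.sum_empty, mul_zero, norm_zero]
  · obtain ⟨x0, hx0⟩ := Finset.card_eq_one.mp h
    right
    rw [hmain, hx0, Finset.sum_singleton, norm_mul, norm_pow,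
      hηabs, one_pow, mul_one, Complex.norm_natCast]
    push_cast [hKdef]
    ring
end

section
/- Let N ≥ 2, let π be a permutation of Z_N, let L = N(N+1), and define the length-L sequence C by c_i = ω_{N+1}^{π(i mod N)·i} for 0 ≤ i < L, where ω_{N+1} = e^{2πi/(N+1)}. Let Ĉ be the unitary DFT of C. Then ĉ_j = 0 for every j ∈ Ω := {1 + a(N+1) : a ∈ Z_N}, and |ĉ_j| = √((N+1)/N) for every j ∈ Z_L \ Ω. -/
open Finset Complex Real

lemma sum_range_mul_eq (f : ℕ → ℂ) (m n : ℕ) :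
    ∑ t ∈ Finset.range (m * n), f t
      = ∑ b ∈ Finset.range n, ∑ a ∈ Finset.range m, f (a + b * m) := by
  induction n with
  | zero => simp
  | succ n ih =>
    rw [Finset.sum_range_succ, ← ih, mul_add, mul_one, Finset.sum_range_add]
    congr 1
    exact Finset.sum_congr rfl fun a _ => by ring_nf

lemma geom_orth (m : ℕ) (hm : 0 < m) (k : ℤ) :
    ∑ b ∈ Finset.range m,
        Complex.exp (2 * (Real.pi : ℂ) * Complex.I * (b : ℂ) * (k : ℂ) / (m : ℂ))
      = if (m : ℤ) ∣ k then (m : ℂ) else 0 := by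
  have hmC : (m : ℂ) ≠ 0 := Nat.cast_ne_zero.mpr hm.ne'
  set z := Complex.exp (2 * (Real.pi : ℂ) * Complex.I * (k : ℂ) / (m : ℂ)) with hz
  have hterm : ∀ b ∈ Finset.range m,
      Complex.exp (2 * (Real.pi : ℂ) * Complex.I * (b : ℂ) * (k : ℂ) / (m : ℂ)) = z ^ b := by
    intro b _
    rw [hz, ← Complex.exp_nat_mul]
    congr 1
    ring
  rw [Finset.sum_congr rfl hterm]
  have hzm : z ^ m = 1 := by
    rw [hz, ← Complex.exp_nat_mul]
    have h1 : (m : ℂ) * (2 * (Real.pi : ℂ) * Complex.I * (k : ℂ) / (m : ℂ))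
        = (k : ℂ) * (2 * (Real.pi : ℂ) * Complex.I) := by field_simp
    rw [h1, Complex.exp_int_mul_two_pi_mul_I]
  by_cases hd : (m : ℤ) ∣ k
  · obtain ⟨d, rfl⟩ := hd
    have hz1 : z = 1 := by
      rw [hz]
      have h1 : 2 * (Real.pi : ℂ) * Complex.I * ((m * d : ℤ) : ℂ) / (m : ℂ)
          = (d : ℂ) * (2 * (Real.pi : ℂ) * Complex.I) := by push_cast; field_simp
      rw [h1, Complex.exp_int_mul_two_pi_mul_I]
    simp [hz1, if_pos (dvd_mul_right _ _)]
  · have hz1 : z ≠ 1 := by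
      intro h
      obtain ⟨n, hn⟩ := Complex.exp_eq_one_iff.mp (hz ▸ h)
      have h2πI : (2 : ℂ) * (Real.pi : ℂ) * Complex.I ≠ 0 := by
        simp [Real.pi_ne_zero, Complex.I_ne_zero]
      field_simp at hn
      have h3 : (2 * (Real.pi : ℂ) * Complex.I) * (k : ℂ)
          = (2 * (Real.pi : ℂ) * Complex.I) * ((n : ℂ) * (m : ℂ)) := by
        linear_combination (2 * (Real.pi : ℂ) * Complex.I) * hn
      have h4 : (k : ℂ) = (n : ℂ) * (m : ℂ) := mul_left_cancel₀ h2πI h3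
      have h5 : k = n * m := by exact_mod_cast h4
      exact hd ⟨n, by linarith⟩
    rw [geom_sum_eq hz1, hzm, sub_self, zero_div, if_neg hd]

/-- dvd transfer: `(N+1) ∣ v*N - j ↔ (N+1) ∣ v + j` over ℤ. -/
lemma dvd_shift (N : ℕ) (v j : ℕ) :
    ((N : ℤ) + 1) ∣ ((v : ℤ) * N - j) ↔ ((N : ℤ) + 1) ∣ ((v : ℤ) + j) := by
  have h1 : (v : ℤ) * N - j = v * (N + 1) - (v + j) := by ring
  rw [h1]
  exact dvd_sub_right ⟨v, by ring⟩



/-- let `N ≥ 2`, `σ` a permutation of `Z_N`, `L = N(N+1)`, and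
`c_i = ω_{N+1}^{σ(i mod N)·i}`. Then the unitary DFT `Ĉ` of `C` satisfies `ĉ_j = 0`
for every `j ∈ Ω = {1 + a(N+1) : a ∈ Z_N}`, and `|ĉ_j| = √((N+1)/N)` for `j ∉ Ω`. -/
theorem stmt9 (N : ℕ) (hN : 2 ≤ N) (σ : Equiv.Perm (ZMod N))
    (c : ℕ → ℂ)
    (hc : ∀ i < N * (N + 1), c i = Complex.exp (2 * (Real.pi : ℂ) * Complex.I *
      ((((σ ((i : ℕ) : ZMod N)).val * i : ℕ)) : ℂ) / (((N + 1 : ℕ)) : ℂ)))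
    (j : ℕ) (hj : j < N * (N + 1)) :
    ((∃ a < N, j = 1 + a * (N + 1)) → udft (N * (N + 1)) c j = 0) ∧
    ((¬ ∃ a < N, j = 1 + a * (N + 1)) →
      ‖udft (N * (N + 1)) c j‖ = Real.sqrt (((N : ℝ) + 1) / (N : ℝ))) := by
  haveI : NeZero N := ⟨by omega⟩
  have hN0 : 0 < N := by omega
  have hLC : ((N * (N + 1) : ℕ) : ℂ) ≠ 0 := Nat.cast_ne_zero.mpr (by positivity)
  have hN1Cn : ((N + 1 : ℕ) : ℂ) ≠ 0 := Nat.cast_ne_zero.mpr (by omega)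
  have hN1C : ((N : ℂ) + 1) ≠ 0 := by push_cast at hN1Cn ⊢; exact hN1Cn
  have hNC : (N : ℂ) ≠ 0 := Nat.cast_ne_zero.mpr hN0.ne'
  -- the key reduction of the DFT sum
  have key : ∑ t ∈ Finset.range (N * (N + 1)), c t *
        Complex.exp (-(2 * (Real.pi : ℂ) * Complex.I * (t : ℂ) * (j : ℂ)) / ((N * (N + 1) : ℕ) : ℂ))
      = ∑ a ∈ Finset.range N,
          (if ((N : ℤ) + 1) ∣ (((σ (a : ZMod N)).val : ℤ) * N - j) then
            ((N : ℂ) + 1) * Complex.exp (2 * (Real.pi : ℂ) * Complex.I * (a : ℂ) *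
              ((((σ (a : ZMod N)).val : ℤ) * N - j : ℤ) : ℂ) / ((N * (N + 1) : ℕ) : ℂ))
          else 0) := by
    rw [sum_range_mul_eq _ N (N + 1), Finset.sum_comm]
    refine Finset.sum_congr rfl fun a ha => ?_
    have haN : a < N := Finset.mem_range.mp ha
    set K : ℤ := ((σ (a : ZMod N)).val : ℤ) * N - j with hK
    have hterm : ∀ b ∈ Finset.range (N + 1),
        c (a + b * N) * Complex.exp (-(2 * (Real.pi : ℂ) * Complex.I * ((a + b * N : ℕ) : ℂ) * (j : ℂ)) / ((N * (N + 1) : ℕ) : ℂ))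
          = Complex.exp (2 * (Real.pi : ℂ) * Complex.I * (a : ℂ) * ((K : ℤ) : ℂ) / ((N * (N + 1) : ℕ) : ℂ))
            * Complex.exp (2 * (Real.pi : ℂ) * Complex.I * (b : ℂ) * ((K : ℤ) : ℂ) / ((N + 1 : ℕ) : ℂ)) := by
      intro b hb
      have hbN : b < N + 1 := Finset.mem_range.mp hb
      have hlt : a + b * N < N * (N + 1) := by nlinarith
      rw [hc _ hlt]
      have hcast : (((a + b * N : ℕ) : ℕ) : ZMod N) = ((a : ℕ) : ZMod N) := by
        push_cast [ZMod.natCast_self]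
        ring
      rw [hcast, ← Complex.exp_add, ← Complex.exp_add]
      congr 1
      have hKC : ((K : ℤ) : ℂ) = ((σ ((a : ℕ) : ZMod N)).val : ℂ) * (N : ℂ) - (j : ℂ) := by
        rw [hK]
        simp only [Int.cast_sub, Int.cast_mul, Int.cast_natCast]
      rw [hKC]
      simp only [Nat.cast_mul, Nat.cast_add]
      field_simp [hNC, hN1C]
      ring
    rw [Finset.sum_congr rfl hterm, ← Finset.mul_sum, geom_orth (N + 1) (by omega) K]
    push_cast
    rw [mul_ite, mul_zero]
    rcases em (((N : ℤ) + 1) ∣ K) with h | h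
    · rw [if_pos h, if_pos h, mul_comm]
    · rw [if_neg h, if_neg h]
  constructor
  · -- j ∈ Ω : the DFT vanishes
    rintro ⟨a₀, ha₀N, hje⟩
    have hzero : (∑ a ∈ Finset.range N,
        (if ((N : ℤ) + 1) ∣ (((σ (a : ZMod N)).val : ℤ) * N - j) then
          ((N : ℂ) + 1) * Complex.exp (2 * (Real.pi : ℂ) * Complex.I * (a : ℂ) *
            ((((σ (a : ZMod N)).val : ℤ) * N - j : ℤ) : ℂ) / ((N * (N + 1) : ℕ) : ℂ))
        else 0)) = 0 := by
      refine Finset.sum_eq_zero fun a ha => ?_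
      rw [if_neg]
      intro hdvd
      rw [dvd_shift] at hdvd
      set v := (σ ((a : ℕ) : ZMod N)).val with hv
      have hvN : v < N := ZMod.val_lt _
      obtain ⟨d, hd⟩ := hdvd
      have hj' : (j : ℤ) = 1 + (a₀ : ℤ) * ((N : ℤ) + 1) := by push_cast [hje]; ring
      have h1 : ((v : ℤ) + 1) = ((N : ℤ) + 1) * (d - a₀) := by
        linear_combination hd - hj'
      have h2 : (N : ℤ) + 1 ≤ (v : ℤ) + 1 :=
        Int.le_of_dvd (by positivity) ⟨d - (a₀ : ℤ), h1⟩
      omega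
    unfold udft
    rw [key, hzero, mul_zero]
  · -- j ∉ Ω : the DFT has the stated magnitude
    intro hΩ
    have hdm := Nat.div_add_mod j (N + 1)
    have hmlt : j % (N + 1) < N + 1 := Nat.mod_lt _ (by omega)
    have hm1 : j % (N + 1) ≠ 1 := by
      intro h
      refine hΩ ⟨j / (N + 1), ?_, ?_⟩
      · exact Nat.div_lt_of_lt_mul (by rw [Nat.mul_comm] at hj; exact hj)
      · conv_lhs => rw [← hdm]
        rw [h]; ring
    set s : ℕ := (N + 1 - j % (N + 1)) % (N + 1) with hs
    have hsfacts : s < N ∧ (s + j % (N + 1) = 0 ∨ s + j % (N + 1) = N + 1) := by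
      rcases Nat.eq_zero_or_pos (j % (N + 1)) with h0 | h0
      · have : s = 0 := by rw [hs, h0, Nat.sub_zero, Nat.mod_self]
        omega
      · have : s = N + 1 - j % (N + 1) := by
          rw [hs]; exact Nat.mod_eq_of_lt (by omega)
        omega
    obtain ⟨hsN, hs_spec⟩ := hsfacts
    set a₀ : ℕ := (σ.symm ((s : ℕ) : ZMod N)).val with ha₀
    have ha₀N : a₀ < N := ZMod.val_lt _
    -- the divisibility condition holds iff a = a₀
    have hiff : ∀ a ∈ Finset.range N,
        ((((N : ℤ) + 1) ∣ (((σ (a : ZMod N)).val : ℤ) * N - j)) ↔ a = a₀) := by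
      intro a ha
      have haN : a < N := Finset.mem_range.mp ha
      set v := (σ ((a : ℕ) : ZMod N)).val with hv
      have hvN : v < N := ZMod.val_lt _
      rw [dvd_shift]
      have hcast : (((N : ℤ) + 1) ∣ ((v : ℤ) + (j : ℤ))) ↔ ((N + 1) ∣ (v + j)) := by
        constructor
        · intro h
          have : ((N + 1 : ℕ) : ℤ) ∣ (((v + j : ℕ) : ℤ)) := by push_cast; exact_mod_cast h
          exact_mod_cast this
        · intro h
          have : ((N + 1 : ℕ) : ℤ) ∣ (((v + j : ℕ) : ℤ)) := Int.natCast_dvd_natCast.mpr h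
          push_cast at this; exact_mod_cast this
      rw [hcast]
      have hsplit : v + j = (N + 1) * (j / (N + 1)) + (v + j % (N + 1)) := by
        conv_lhs => rw [← hdm]
        ring
      rw [hsplit, Nat.dvd_add_right (dvd_mul_right _ _)]
      -- characterize: (N+1) ∣ v + m ↔ v = s, then v = s ↔ a = a₀
      have hchar : (N + 1) ∣ (v + j % (N + 1)) ↔ v = s := by
        constructor
        · rintro ⟨d, hd⟩
          have hdle : d ≤ 1 := by
            by_contra hd2
            have : (N + 1) * 2 ≤ (N + 1) * d := Nat.mul_le_mul_left _ (by omega)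
            omega
          interval_cases d <;> omega
        · intro hvs
          rw [hvs]
          rcases hs_spec with h | h
          · exact ⟨0, by omega⟩
          · exact ⟨1, by omega⟩
      rw [hchar]
      constructor
      · intro hvs
        have h1 : σ ((a : ℕ) : ZMod N) = ((s : ℕ) : ZMod N) := by
          apply ZMod.val_injective
          rw [← hv, hvs, ZMod.val_cast_of_lt hsN]
        have h2 : ((a : ℕ) : ZMod N) = σ.symm ((s : ℕ) : ZMod N) :=
          (Equiv.eq_symm_apply σ).mpr h1
        rw [ha₀, ← h2, ZMod.val_cast_of_lt haN]
      · rintro rfl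
        have h2 : ((a₀ : ℕ) : ZMod N) = σ.symm ((s : ℕ) : ZMod N) := by
          rw [ha₀, ZMod.natCast_val, ZMod.cast_id]
        rw [hv, h2, Equiv.apply_symm_apply, ZMod.val_cast_of_lt hsN]
    unfold udft
    rw [key, Finset.sum_congr rfl (fun a ha => if_congr (hiff a ha) rfl rfl),
      Finset.sum_ite_eq' (Finset.range N) a₀, if_pos (Finset.mem_range.mpr ha₀N)]
    set K₀ : ℤ := (((σ ((a₀ : ℕ) : ZMod N)).val : ℤ) * N - j) with hK₀
    have hre : 2 * (Real.pi : ℂ) * Complex.I * (a₀ : ℂ) * ((K₀ : ℤ) : ℂ) / ((N * (N + 1) : ℕ) : ℂ)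
        = (((2 * Real.pi * (a₀ : ℝ) * ((K₀ : ℤ) : ℝ) / ((N * (N + 1) : ℕ) : ℝ)) : ℝ) : ℂ) * Complex.I := by
      push_cast
      field_simp
    rw [hre, norm_mul, norm_mul]
    have hexp : ‖Complex.exp ((((2 * Real.pi * (a₀ : ℝ) * ((K₀ : ℤ) : ℝ) / ((N * (N + 1) : ℕ) : ℝ)) : ℝ) : ℂ) * Complex.I)‖ = 1 := by
      rw [Complex.norm_exp_ofReal_mul_I]
    rw [hexp, mul_one, norm_inv]
    have h1 : ‖((Real.sqrt ((N * (N + 1) : ℕ) : ℝ) : ℝ) : ℂ)‖ = Real.sqrt ((N * (N + 1) : ℕ) : ℝ) := by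
      rw [Complex.norm_real, Real.norm_of_nonneg (Real.sqrt_nonneg _)]
    have h2 : ‖(N : ℂ) + 1‖ = (N : ℝ) + 1 := by
      have : ((N : ℂ) + 1) = (((N : ℝ) + 1 : ℝ) : ℂ) := by push_cast; ring
      rw [this, Complex.norm_real, Real.norm_of_nonneg (by positivity)]
    rw [h1, h2]
    -- final real arithmetic
    have hNR : (0 : ℝ) < (N : ℝ) := by exact_mod_cast hN0
    have hcastL : ((N * (N + 1) : ℕ) : ℝ) = (N : ℝ) * ((N : ℝ) + 1) := by push_cast; ring
    rw [hcastL, Real.sqrt_mul (le_of_lt hNR), Real.sqrt_div (by positivity : (0:ℝ) ≤ (N:ℝ) + 1)]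
    have hb : Real.sqrt ((N : ℝ) + 1) ≠ 0 := by
      rw [Real.sqrt_ne_zero']; positivity
    have ha : Real.sqrt (N : ℝ) ≠ 0 := by
      rw [Real.sqrt_ne_zero']; exact hNR
    have hsq : (N : ℝ) + 1 = Real.sqrt ((N : ℝ) + 1) * Real.sqrt ((N : ℝ) + 1) :=
      (Real.mul_self_sqrt (by positivity)).symm
    rw [mul_inv]
    field_simp
    linear_combination hsq
end

section
/- Let K : ℕ → ℕ be a function with K(N) ≥ 1 for all N and K(N) → ∞ as N → ∞. Then, writing L = L(N) = N(N+1), the optimality factor η(N) = √((K(N)·L − 1)/((K(N)−1)·L + N)) tends to 1 as N → ∞. Equivalently, the maximum correlation value N+1 of the CFR-based SCS family of K(N) sequences of length L with n = N forbidden carriers asymptotically achieves the lower bound L·√(((K(N)−1)L + N)/((L − N)(K(N)·L − 1))). -/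
open Filter

lemma stmt10_aux (k n : ℝ) (hk : 1 ≤ k) (hn : 1 ≤ n) :
    (n + 1) / ((n * (n + 1)) *
      Real.sqrt (((k - 1) * (n * (n + 1)) + n) /
        (((n * (n + 1)) - n) * (k * (n * (n + 1)) - 1)))) =
    Real.sqrt ((k * (n * (n + 1)) - 1) / ((k - 1) * (n * (n + 1)) + n)) := by
  set a := (k - 1) * (n * (n + 1)) + n with ha_def
  set c := k * (n * (n + 1)) - 1 with hc_def
  have hn0 : (0:ℝ) < n := by linarith
  have ha : (0:ℝ) < a := by
    have h1 : (0:ℝ) ≤ (k - 1) * (n * (n + 1)) :=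
      mul_nonneg (by linarith) (by nlinarith)
    nlinarith
  have hc : (0:ℝ) < c := by nlinarith [mul_le_mul_of_nonneg_right hk (by nlinarith : (0:ℝ) ≤ n * (n + 1))]
  have hb : (n * (n + 1) - n) * c = n ^ 2 * c := by ring
  rw [hb, Real.sqrt_div ha.le, Real.sqrt_mul (sq_nonneg n), Real.sqrt_sq hn0.le,
    Real.sqrt_div hc.le]
  have hsa : Real.sqrt a ≠ 0 := ne_of_gt (Real.sqrt_pos.mpr ha)
  have hsc : Real.sqrt c ≠ 0 := ne_of_gt (Real.sqrt_pos.mpr hc)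
  field_simp

/-- let `K : ℕ → ℕ` with `K N ≥ 1` and `K N → ∞`. Writing
`L = N(N+1)`, the optimality factor `η(N) = √((K(N)·L − 1)/((K(N)−1)·L + N))`
tends to `1` as `N → ∞`; equivalently, the maximum correlation value `N+1` of the
CFR-based SCS family asymptotically achieves the lower bound
`L·√(((K(N)−1)L + N)/((L − N)(K(N)·L − 1)))`. -/
theorem stmt10 (K : ℕ → ℕ) (hK1 : ∀ N, 1 ≤ K N)
    (hK : Tendsto (fun N : ℕ => (K N : ℝ)) atTop atTop) :
    Tendsto (fun N : ℕ =>
        Real.sqrt (((K N : ℝ) * ((N : ℝ) * ((N : ℝ) + 1)) - 1) /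
          (((K N : ℝ) - 1) * ((N : ℝ) * ((N : ℝ) + 1)) + (N : ℝ))))
      atTop (nhds 1) ∧
    Tendsto (fun N : ℕ =>
        ((N : ℝ) + 1) /
          (((N : ℝ) * ((N : ℝ) + 1)) *
            Real.sqrt ((((K N : ℝ) - 1) * ((N : ℝ) * ((N : ℝ) + 1)) + (N : ℝ)) /
              ((((N : ℝ) * ((N : ℝ) + 1)) - (N : ℝ)) *
                ((K N : ℝ) * ((N : ℝ) * ((N : ℝ) + 1)) - 1)))))
      atTop (nhds 1) := by
  have hKinf : Tendsto (fun N : ℕ => (K N : ℝ) - 1) atTop atTop := by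
    simpa [sub_eq_add_neg] using tendsto_atTop_add_const_right atTop (-1 : ℝ) hK
  have h0 : Tendsto (fun N : ℕ => ((K N : ℝ) - 1)⁻¹) atTop (nhds 0) :=
    hKinf.inv_tendsto_atTop
  set r : ℕ → ℝ := fun N =>
    ((K N : ℝ) * ((N : ℝ) * ((N : ℝ) + 1)) - 1) /
      (((K N : ℝ) - 1) * ((N : ℝ) * ((N : ℝ) + 1)) + (N : ℝ)) with hr_def
  have hg : Tendsto (fun N : ℕ => 1 + ((K N : ℝ) - 1)⁻¹) atTop (nhds 1) := by
    simpa using (tendsto_const_nhds (x := (1:ℝ)) (f := atTop)).add h0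
  have hev : ∀ᶠ N : ℕ in atTop, (2:ℝ) ≤ (K N : ℝ) ∧ 1 ≤ N :=
    (hK.eventually_ge_atTop 2).and (eventually_ge_atTop 1)
  have hrlim : Tendsto r atTop (nhds 1) := by
    apply tendsto_of_tendsto_of_tendsto_of_le_of_le'
      (tendsto_const_nhds (x := (1:ℝ)) (f := atTop)) hg
    · filter_upwards [hev] with N h
      obtain ⟨hk2, hN1⟩ := h
      have hn : (1:ℝ) ≤ N := by exact_mod_cast hN1
      set k := (K N : ℝ)
      set n := (N : ℝ)
      have hden : (0:ℝ) < (k - 1) * (n * (n + 1)) + n := by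
        have h1 : (0:ℝ) ≤ (k - 1) * (n * (n + 1)) :=
          mul_nonneg (by linarith) (by nlinarith)
        nlinarith
      rw [hr_def]
      rw [le_div_iff₀ hden]
      nlinarith
    · filter_upwards [hev] with N h
      obtain ⟨hk2, hN1⟩ := h
      have hn : (1:ℝ) ≤ N := by exact_mod_cast hN1
      set k := (K N : ℝ)
      set n := (N : ℝ)
      have hden : (0:ℝ) < (k - 1) * (n * (n + 1)) + n := by
        have h1 : (0:ℝ) ≤ (k - 1) * (n * (n + 1)) :=
          mul_nonneg (by linarith) (by nlinarith)
        nlinarith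
      have hk1 : (0:ℝ) < k - 1 := by linarith
      have hki : (k - 1)⁻¹ * (k - 1) = 1 := inv_mul_cancel₀ (ne_of_gt hk1)
      have hkinv : (0:ℝ) ≤ (k - 1)⁻¹ := inv_nonneg.mpr hk1.le
      rw [hr_def]
      rw [div_le_iff₀ hden]
      nlinarith [mul_nonneg hkinv (by linarith : (0:ℝ) ≤ n), mul_nonneg (mul_nonneg hkinv (by linarith : (0:ℝ) ≤ n)) (by linarith : (0:ℝ) ≤ n)]
  have h1 : Tendsto (fun N : ℕ => Real.sqrt (r N)) atTop (nhds 1) := by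
    have := (Real.continuous_sqrt.tendsto 1).comp hrlim
    rw [Real.sqrt_one] at this
    exact this
  refine ⟨h1, ?_⟩
  apply h1.congr'
  filter_upwards [eventually_ge_atTop 1] with N hN1
  have hn : (1:ℝ) ≤ N := by exact_mod_cast hN1
  have hk : (1:ℝ) ≤ (K N : ℝ) := by exact_mod_cast hK1 N
  exact (stmt10_aux (K N) N hk hn).symm
end
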